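/- Let M, N be n×n matrices with A = M + N invertible, α > 0, ω ∈ [0,2), and assume H = αI + M and S = αI + N are invertible. Let J_S and P_H be n×n matrices with ‖J_S‖ ≤ 1 and ‖P_H‖ ≤ 1. Let b = Ax for some vector x, let x̂ ≠ x, and let Δr be a vector satisfying ‖Δr‖ ≤ ε_s‖b − Ax̂‖ + ε_r(‖A‖‖x̂‖ + ‖b‖) for some ε_s, ε_r ≥ 0. Define μ by ‖b − Ax̂‖ = μ‖A‖‖x − x̂‖. Then ‖(I+J_S)S⁻¹H⁻¹(I+P_H)·Δr‖ ≤ 4·(c_F·κ(A)/(α(2−ω)))·((μ·ε_s + ε_r)‖x − x̂‖ + 2ε_r‖x‖), where c_F = ‖I − T_F(α,ω)‖. -/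

import Mathlib

/-!
Since `H S = α² I + M N + α A`, the GADI matrix satisfies `I − T_F = (2 − ω) α S⁻¹ H⁻¹ A`, i.e.
`S⁻¹ H⁻¹ = ((2 − ω) α)⁻¹ (I − T_F) A⁻¹`, so `‖S⁻¹ H⁻¹‖ ≤ c_F ‖A⁻¹‖ / (α (2 − ω))`.
The factors `I + J_S` and `I + P_H` have norm at most `2`, and the hypotheses on `Δr`, together
with `‖x̂‖ ≤ ‖x‖ + ‖x − x̂‖` and `‖b‖ ≤ ‖A‖ ‖x‖`, give
`‖Δr‖ ≤ ‖A‖ ((μ ε_s + ε_r) ‖x − x̂‖ + 2 ε_r ‖x‖)`. Multiplying the three bounds yields the claim.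
-/

open Matrix

/-- The spectral (operator 2-)norm of a real matrix. -/
noncomputable def specNorm {n : ℕ} (A : Matrix (Fin n) (Fin n) ℝ) : ℝ :=
  ‖Matrix.toEuclideanCLM (𝕜 := ℝ) A‖

/-- The Euclidean norm of a real vector. -/
noncomputable def vecNorm {n : ℕ} (v : Fin n → ℝ) : ℝ :=
  ‖(WithLp.equiv 2 (Fin n → ℝ)).symm v‖

/-- The (2-norm) condition number `κ(B) = ‖B‖‖B⁻¹‖`. -/
noncomputable def condNum {n : ℕ} (A : Matrix (Fin n) (Fin n) ℝ) : ℝ :=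
  specNorm A * specNorm A⁻¹

/-- The GADI iteration matrix `T_F(α,ω) = S⁻¹ H⁻¹ (α² I + M N − (1−ω) α A)`
with `A = M + N`, `H = α I + M`, `S = α I + N`. -/
noncomputable def gadiTF {n : ℕ} (M N : Matrix (Fin n) (Fin n) ℝ) (α ω : ℝ) :
    Matrix (Fin n) (Fin n) ℝ :=
  (α • 1 + N)⁻¹ * (α • 1 + M)⁻¹ * ((α ^ 2) • 1 + M * N - ((1 - ω) * α) • (M + N))

open scoped Matrix.Norms.L2Operator

section Norms

variable {n : ℕ}

lemma specNorm_eq_norm (A : Matrix (Fin n) (Fin n) ℝ) : specNorm A = ‖A‖ := rfl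

lemma specNorm_nonneg (A : Matrix (Fin n) (Fin n) ℝ) : 0 ≤ specNorm A := norm_nonneg _

lemma specNorm_one_add_le_two {J : Matrix (Fin n) (Fin n) ℝ} (hJ : specNorm J ≤ 1) :
    specNorm (1 + J) ≤ 2 := by
  have h1 : specNorm (1 : Matrix (Fin n) (Fin n) ℝ) ≤ 1 := by
    rw [specNorm, map_one]
    exact ContinuousLinearMap.norm_id_le
  rw [specNorm_eq_norm] at hJ h1 ⊢
  linarith [norm_add_le (1 : Matrix (Fin n) (Fin n) ℝ) J]

lemma specNorm_mul₃_le (A B C : Matrix (Fin n) (Fin n) ℝ) :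
    specNorm (A * B * C) ≤ specNorm A * specNorm B * specNorm C := by
  simp only [specNorm_eq_norm]
  exact norm_mul₃_le

lemma vecNorm_nonneg (v : Fin n → ℝ) : 0 ≤ vecNorm v := norm_nonneg _

lemma vecNorm_mulVec_le (A : Matrix (Fin n) (Fin n) ℝ) (v : Fin n → ℝ) :
    vecNorm (A *ᵥ v) ≤ specNorm A * vecNorm v :=
  l2_opNorm_mulVec A (WithLp.toLp 2 v)

lemma vecNorm_le_add_vecNorm_sub (u v : Fin n → ℝ) : vecNorm v ≤ vecNorm u + vecNorm (u - v) := by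
  simpa [vecNorm] using norm_le_norm_add_norm_sub (WithLp.toLp 2 u) (WithLp.toLp 2 v)

end Norms

section GADI

variable {n : ℕ} {M N : Matrix (Fin n) (Fin n) ℝ} {α ω : ℝ}

lemma one_sub_gadiTF (hH : IsUnit (α • 1 + M).det) (hS : IsUnit (α • 1 + N).det) :
    1 - gadiTF M N α ω = ((2 - ω) * α) • ((α • 1 + N)⁻¹ * (α • 1 + M)⁻¹ * (M + N)) := by
  have hHS : (α • 1 + M) * (α • 1 + N) = (α ^ 2) • 1 + M * N + α • (M + N) := by
    simp only [Matrix.add_mul, Matrix.mul_add, Matrix.smul_mul, Matrix.mul_smul, smul_smul,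
      Matrix.one_mul, Matrix.mul_one, smul_add]
    rw [sq]
    abel
  have hinv : (α • 1 + N)⁻¹ * (α • 1 + M)⁻¹ * ((α • 1 + M) * (α • 1 + N)) = 1 := by
    rw [Matrix.mul_assoc, ← Matrix.mul_assoc (α • 1 + M)⁻¹, Matrix.nonsing_inv_mul _ hH,
      Matrix.one_mul, Matrix.nonsing_inv_mul _ hS]
  rw [gadiTF]
  nth_rewrite 1 [← hinv]
  rw [← Matrix.mul_sub, hHS, add_sub_sub_cancel, ← add_smul, Matrix.mul_smul]
  congr 1
  ring

lemma inv_mul_inv_eq_smul_one_sub_gadiTF_mul_inv (hα : α ≠ 0) (hω : ω ≠ 2)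
    (hA : IsUnit (M + N).det) (hH : IsUnit (α • 1 + M).det) (hS : IsUnit (α • 1 + N).det) :
    (α • 1 + N)⁻¹ * (α • 1 + M)⁻¹ = ((2 - ω) * α)⁻¹ • ((1 - gadiTF M N α ω) * (M + N)⁻¹) := by
  have hc : (2 - ω) * α ≠ 0 := mul_ne_zero (sub_ne_zero.mpr hω.symm) hα
  rw [one_sub_gadiTF hH hS, Matrix.smul_mul, Matrix.mul_assoc _ (M + N),
    Matrix.mul_nonsing_inv _ hA, Matrix.mul_one, smul_smul, inv_mul_cancel₀ hc, one_smul]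

lemma specNorm_inv_mul_inv_le (hα : 0 < α) (hω : ω < 2)
    (hA : IsUnit (M + N).det) (hH : IsUnit (α • 1 + M).det) (hS : IsUnit (α • 1 + N).det) :
    specNorm ((α • 1 + N)⁻¹ * (α • 1 + M)⁻¹) ≤
      specNorm (1 - gadiTF M N α ω) * specNorm (M + N)⁻¹ / (α * (2 - ω)) := by
  have hc : 0 < (2 - ω) * α := mul_pos (sub_pos.mpr hω) hα
  rw [inv_mul_inv_eq_smul_one_sub_gadiTF_mul_inv hα.ne' hω.ne hA hH hS, specNorm_eq_norm,
    norm_smul, Real.norm_of_nonneg (inv_nonneg.mpr hc.le), mul_comm α, inv_mul_eq_div]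
  gcongr
  exact norm_mul_le _ _

end GADI

lemma vecNorm_residual_perturbation_le {n : ℕ} {A : Matrix (Fin n) (Fin n) ℝ}
    {b x xh Δr : Fin n → ℝ} {εs εr μ : ℝ} (hb : b = A *ᵥ x) (hεr : 0 ≤ εr)
    (hΔr : vecNorm Δr ≤
      εs * vecNorm (b - A *ᵥ xh) + εr * (specNorm A * vecNorm xh + vecNorm b))
    (hμ : vecNorm (b - A *ᵥ xh) = μ * specNorm A * vecNorm (x - xh)) :
    vecNorm Δr ≤ specNorm A * ((μ * εs + εr) * vecNorm (x - xh) + 2 * εr * vecNorm x) := by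
  have hxh : specNorm A * vecNorm xh ≤ specNorm A * (vecNorm x + vecNorm (x - xh)) :=
    mul_le_mul_of_nonneg_left (vecNorm_le_add_vecNorm_sub x xh) (specNorm_nonneg A)
  have hbx : vecNorm b ≤ specNorm A * vecNorm x := hb ▸ vecNorm_mulVec_le A x
  rw [hμ] at hΔr
  linear_combination hΔr + εr * (add_le_add hxh hbx)

theorem residual_perturbation_bound_general {n : ℕ}
    (M N A H S : Matrix (Fin n) (Fin n) ℝ) (hA : A = M + N)
    (α ω : ℝ) (hα : 0 < α) (hω : ω ∈ Set.Ico (0 : ℝ) 2)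
    (hH : H = α • 1 + M) (hS : S = α • 1 + N)
    (hAinv : IsUnit A.det) (hHinv : IsUnit H.det) (hSinv : IsUnit S.det)
    (J_S P_H : Matrix (Fin n) (Fin n) ℝ)
    (hJS : specNorm J_S ≤ 1) (hPH : specNorm P_H ≤ 1)
    (b x xh Δr : Fin n → ℝ) (hb : b = A *ᵥ x)
    (εs εr : ℝ) (hεr : 0 ≤ εr)
    (hΔr : vecNorm Δr ≤
      εs * vecNorm (b - A *ᵥ xh) + εr * (specNorm A * vecNorm xh + vecNorm b))
    (μ : ℝ) (hμ : vecNorm (b - A *ᵥ xh) = μ * specNorm A * vecNorm (x - xh)) :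
    vecNorm (((1 + J_S) * S⁻¹ * H⁻¹ * (1 + P_H)) *ᵥ Δr) ≤
      4 * (specNorm (1 - gadiTF M N α ω) * condNum A / (α * (2 - ω))) *
        ((μ * εs + εr) * vecNorm (x - xh) + 2 * εr * vecNorm x) := by
  have hQ : specNorm (S⁻¹ * H⁻¹) ≤
      specNorm (1 - gadiTF M N α ω) * specNorm A⁻¹ / (α * (2 - ω)) := by
    subst hA hH hS
    exact specNorm_inv_mul_inv_le hα hω.2 hAinv hHinv hSinv
  have hΔ := vecNorm_residual_perturbation_le hb hεr hΔr hμ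
  calc vecNorm (((1 + J_S) * S⁻¹ * H⁻¹ * (1 + P_H)) *ᵥ Δr)
      ≤ specNorm (1 + J_S) * specNorm (S⁻¹ * H⁻¹) * specNorm (1 + P_H) * vecNorm Δr := by
        rw [Matrix.mul_assoc (1 + J_S)]
        exact (vecNorm_mulVec_le _ _).trans
          (mul_le_mul_of_nonneg_right (specNorm_mul₃_le _ _ _) (vecNorm_nonneg _))
    _ ≤ 2 * (specNorm (1 - gadiTF M N α ω) * specNorm A⁻¹ / (α * (2 - ω))) * 2 *
          (specNorm A * ((μ * εs + εr) * vecNorm (x - xh) + 2 * εr * vecNorm x)) := by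
        have hcoeff_nonneg := (specNorm_nonneg _).trans hQ
        gcongr
        exacts [vecNorm_nonneg _, specNorm_nonneg _, specNorm_nonneg _,
          specNorm_one_add_le_two hJS, specNorm_one_add_le_two hPH]
    _ = _ := by rw [condNum]; ring

/-- **Residual-perturbation bound (cf. (3.13)).** If `‖J_S‖, ‖P_H‖ ≤ 1`, `b = A x`, `x̂ ≠ x`,
`‖Δr‖ ≤ ε_s‖b − A x̂‖ + ε_r(‖A‖‖x̂‖ + ‖b‖)`, and `‖b − A x̂‖ = μ‖A‖‖x − x̂‖`, then
`‖(I+J_S)S⁻¹H⁻¹(I+P_H)Δr‖ ≤ 4 (c_F κ(A)/(α(2−ω))) ((μ ε_s + ε_r)‖x − x̂‖ + 2 ε_r‖x‖)`,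
where `c_F = ‖I − T_F(α,ω)‖`. -/
theorem residual_perturbation_bound {n : ℕ}
    (M N A H S : Matrix (Fin n) (Fin n) ℝ) (hA : A = M + N)
    (α ω : ℝ) (hα : 0 < α) (hω : ω ∈ Set.Ico (0 : ℝ) 2)
    (hH : H = α • 1 + M) (hS : S = α • 1 + N)
    (hAinv : IsUnit A.det) (hHinv : IsUnit H.det) (hSinv : IsUnit S.det)
    (J_S P_H : Matrix (Fin n) (Fin n) ℝ)
    (hJS : specNorm J_S ≤ 1) (hPH : specNorm P_H ≤ 1)
    (b x xh Δr : Fin n → ℝ) (hb : b = A *ᵥ x) (hxh : xh ≠ x)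
    (εs εr : ℝ) (hεs : 0 ≤ εs) (hεr : 0 ≤ εr)
    (hΔr : vecNorm Δr ≤
      εs * vecNorm (b - A *ᵥ xh) + εr * (specNorm A * vecNorm xh + vecNorm b))
    (μ : ℝ) (hμ : vecNorm (b - A *ᵥ xh) = μ * specNorm A * vecNorm (x - xh)) :
    vecNorm (((1 + J_S) * S⁻¹ * H⁻¹ * (1 + P_H)) *ᵥ Δr) ≤
      4 * (specNorm (1 - gadiTF M N α ω) * condNum A / (α * (2 - ω))) *
        ((μ * εs + εr) * vecNorm (x - xh) + 2 * εr * vecNorm x) :=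
  residual_perturbation_bound_general M N A H S hA α ω hα hω hH hS hAinv hHinv hSinv J_S P_H hJS hPH
    b x xh Δr hb εs εr hεr hΔr μ hμ
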